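/- In any stable event configuration, if x ∈ argmax_{u≠v} M^v_{v,u} and M^v_{v,x} > 0, then x belongs to every event held by v; equivalently, every cost-minimizing strategy realizing given invitation rates includes the maximally-invited agent in all its events. -/

import Mathlib

/-!
A strategy of `v` affects `v`'s connections, and the `c`-part of its cost, only through the
invitation rates `u ↦ Σ_{e ∋ u} r_e`; the `b`-part is `b` times the total rate. Any invitation
profile with maximum `M` is realized with total rate `M` by a chain of nested events, so in a
stable configuration the total rate of `v` is at most `M^v_{v,x}`. An event of positive rate
missing `x` would make the total rate exceed `M^v_{v,x}`.
-/

open Finset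

/-- An event configuration: each agent holds a finite list of events,
each event being a set of attendees together with a rate. -/
abbrev Config (V : Type*) := V → List (Finset V × ℝ)

section Game

variable {V : Type*} [Fintype V] [DecidableEq V]

/-- A valid strategy for `v`: every event contains `v` and has positive rate. -/
def ValidStrategy (v : V) (s : List (Finset V × ℝ)) : Prop :=
  ∀ e ∈ s, v ∈ e.1 ∧ 0 < e.2

def ConfigValid (cfg : Config V) : Prop := ∀ v, ValidStrategy v (cfg v)

/-- The meeting rate between `u` and `v` supported by `w` (rate of events held by `w`
attended by both `u` and `v`). -/
def rateBy (cfg : Config V) (w u v : V) : ℝ :=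
  ((cfg w).map (fun e => if u ∈ e.1 ∧ v ∈ e.1 then e.2 else 0)).sum

/-- The total meeting rate between `u` and `v`. -/
def meet (cfg : Config V) (u v : V) : ℝ := ∑ w, rateBy cfg w u v

/-- `u` and `v` are connected when their meeting rate is at least the threshold `1`. -/
def connected (cfg : Config V) (u v : V) : Prop := u ≠ v ∧ 1 ≤ meet cfg u v

open scoped Classical in
/-- The set of agents connected to `v`. -/
noncomputable def nbrs (cfg : Config V) (v : V) : Finset V :=
  univ.filter (fun u => connected cfg u v)

/-- The cost of strategy `s` for agent `v` with parameters `b, c`. -/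
def stratCost (b c : ℝ) (v : V) (s : List (Finset V × ℝ)) : ℝ :=
  (s.map (fun e => e.2 * (c * ((e.1.erase v).card : ℝ) + b))).sum

/-- Utility of agent `v`: benefit `a` per connection minus cost of own events. -/
noncomputable def utility (a b c : ℝ) (cfg : Config V) (v : V) : ℝ :=
  a * ((nbrs cfg v).card : ℝ) - stratCost b c v (cfg v)

/-- A configuration is stable when it is valid and is a Nash equilibrium:
no agent can strictly improve her utility by a unilateral change of strategy. -/
def Stable (a b c : ℝ) (cfg : Config V) : Prop :=
  ConfigValid cfg ∧ ∀ v (s : List (Finset V × ℝ)), ValidStrategy v s →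
    utility a b c (Function.update cfg v s) v ≤ utility a b c cfg v

/-- A configuration supports the graph `G` when adjacency coincides with connection. -/
def Supports (cfg : Config V) (G : SimpleGraph V) : Prop :=
  ∀ u v, G.Adj u v ↔ connected cfg u v

end Game

section Strategies

variable {V : Type*}

def totalRate (s : List (Finset V × ℝ)) : ℝ :=
  (s.map Prod.snd).sum

@[simp]
lemma totalRate_nil : totalRate ([] : List (Finset V × ℝ)) = 0 := rfl

@[simp]
lemma totalRate_cons (e : Finset V × ℝ) (s : List (Finset V × ℝ)) :
    totalRate (e :: s) = e.2 + totalRate s := by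
  simp [totalRate]

variable [DecidableEq V]

def inviteRate (s : List (Finset V × ℝ)) (u : V) : ℝ :=
  (s.map fun e => if u ∈ e.1 then e.2 else 0).sum

@[simp]
lemma inviteRate_nil (u : V) : inviteRate [] u = 0 := rfl

@[simp]
lemma inviteRate_cons (e : Finset V × ℝ) (s : List (Finset V × ℝ)) (u : V) :
    inviteRate (e :: s) u = (if u ∈ e.1 then e.2 else 0) + inviteRate s u := by
  simp [inviteRate]

lemma inviteRate_nonneg {v : V} {s : List (Finset V × ℝ)} (hs : ValidStrategy v s) (u : V) :
    0 ≤ inviteRate s u :=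
  List.sum_nonneg <| by
    simp only [List.mem_map]
    rintro _ ⟨e, he, rfl⟩
    split_ifs
    exacts [(hs e he).2.le, le_rfl]

lemma inviteRate_lt_totalRate {v x : V} {s : List (Finset V × ℝ)} (hs : ValidStrategy v s)
    {e : Finset V × ℝ} (he : e ∈ s) (hxe : x ∉ e.1) : inviteRate s x < totalRate s :=
  List.sum_lt_sum _ _
    (fun e' he' => by split_ifs; exacts [le_rfl, (hs e' he').2.le])
    ⟨e, he, by simpa [hxe] using (hs e he).2⟩

/-- The events are `{v} ∪ T ⊇ {v} ∪ T₁ ⊇ ⋯` for the upper level sets `Tₖ` of `f` on `T`, each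
carrying the gap between consecutive values of `f`, so the rates telescope to `max f ≤ B`. -/
lemma exists_validStrategy_inviteRate_eq_indicator (v : V) (T : Finset V) (hvT : v ∉ T)
    (f : V → ℝ) (B : ℝ) (hB : 0 ≤ B) (hpos : ∀ u ∈ T, 0 < f u) (hle : ∀ u ∈ T, f u ≤ B) :
    ∃ s, ValidStrategy v s ∧ (∀ u, u ≠ v → inviteRate s u = if u ∈ T then f u else 0) ∧
      totalRate s ≤ B := by
  induction T using Finset.strongInduction generalizing f B with
  | H T ih =>
  rcases T.eq_empty_or_nonempty with rfl | hne
  · exact ⟨[], by simp [ValidStrategy], by simp, by simpa using hB⟩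
  obtain ⟨u₀, hu₀, hmin⟩ := T.exists_min_image f hne
  set t := f u₀
  set T' := T.filter (t < f ·)
  have hT' : T' ⊂ T := Finset.filter_ssubset.2 ⟨u₀, hu₀, lt_irrefl t⟩
  obtain ⟨s, hs, hinv, htot⟩ := ih T' hT' (fun h => hvT (hT'.subset h)) (f · - t) (B - t)
    (sub_nonneg.2 (hle u₀ hu₀)) (fun u hu => sub_pos.2 (Finset.mem_filter.1 hu).2)
    (fun u hu => sub_le_sub_right (hle u (hT'.subset hu)) t)
  refine ⟨(insert v T, t) :: s, ?_, fun u hu => ?_, by simp; linarith⟩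
  · exact List.forall_mem_cons.2 ⟨⟨Finset.mem_insert_self v T, hpos u₀ hu₀⟩, hs⟩
  · by_cases huT : u ∈ T
    · by_cases hlt : t < f u
      · simp [hinv u hu, huT, T', hlt]
      · simp only [inviteRate_cons, Finset.mem_insert, huT, or_true, ↓reduceIte, hinv u hu,
          Finset.mem_filter, hlt, and_false, add_zero, T']
        exact le_antisymm (hmin u huT) (not_lt.1 hlt)
    · simp [hinv u hu, huT, hu, T']

lemma exists_validStrategy_inviteRate_eq [Fintype V] (v : V) (f : V → ℝ) (B : ℝ) (hB : 0 ≤ B)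
    (hf : ∀ u, u ≠ v → 0 ≤ f u) (hfB : ∀ u, u ≠ v → f u ≤ B) :
    ∃ s, ValidStrategy v s ∧ (∀ u, u ≠ v → inviteRate s u = f u) ∧ totalRate s ≤ B := by
  obtain ⟨s, hs, hinv, htot⟩ := exists_validStrategy_inviteRate_eq_indicator v
    (Finset.univ.filter fun u => u ≠ v ∧ 0 < f u) (by simp) f B hB
    (fun u hu => (Finset.mem_filter.1 hu).2.2) (fun u hu => hfB u (Finset.mem_filter.1 hu).2.1)
  refine ⟨s, hs, fun u hu => ?_, htot⟩
  rw [hinv u hu]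
  split_ifs with h
  · rfl
  · simp only [Finset.mem_filter, Finset.mem_univ, true_and, not_and, not_lt] at h
    exact le_antisymm (hf u hu) (h hu)

end Strategies

section Response

variable {V : Type*} [DecidableEq V]

lemma rateBy_comm (cfg : Config V) (w u v : V) : rateBy cfg w u v = rateBy cfg w v u := by
  simp only [rateBy, and_comm]

lemma rateBy_eq_inviteRate {cfg : Config V} {w v : V} (h : ∀ e ∈ cfg w, v ∈ e.1) (u : V) :
    rateBy cfg w u v = inviteRate (cfg w) u :=
  congrArg List.sum <| List.map_congr_left fun e he => by simp [h e he]

variable [Fintype V]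

lemma meet_update_eq {cfg : Config V} {v u : V} {s : List (Finset V × ℝ)}
    (hs : ∀ e ∈ s, v ∈ e.1) (hv : ∀ e ∈ cfg v, v ∈ e.1)
    (h : inviteRate s u = inviteRate (cfg v) u) :
    meet (Function.update cfg v s) u v = meet cfg u v := by
  refine Finset.sum_congr rfl fun w _ => ?_
  rcases eq_or_ne w v with rfl | hw
  · rw [rateBy_eq_inviteRate hv, rateBy_eq_inviteRate (by rwa [Function.update_self]),
      Function.update_self, h]
  · simp only [rateBy, Function.update_of_ne hw]

lemma nbrs_update_eq {cfg : Config V} {v : V} {s : List (Finset V × ℝ)}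
    (hs : ∀ e ∈ s, v ∈ e.1) (hv : ∀ e ∈ cfg v, v ∈ e.1)
    (h : ∀ u, u ≠ v → inviteRate s u = inviteRate (cfg v) u) :
    nbrs (Function.update cfg v s) v = nbrs cfg v := by
  classical
  unfold nbrs
  exact Finset.filter_congr fun u _ =>
    and_congr_right fun hu => by rw [meet_update_eq hs hv (h u hu)]

lemma stratCost_eq (b c : ℝ) (v : V) (s : List (Finset V × ℝ)) :
    stratCost b c v s = c * ∑ u ∈ Finset.univ.erase v, inviteRate s u + b * totalRate s := by
  induction s with
  | nil => simp [stratCost]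
  | cons e s ih =>
    have hcard : ∑ u ∈ Finset.univ.erase v, (if u ∈ e.1 then e.2 else 0) =
        (e.1.erase v).card * e.2 := by
      rw [Finset.sum_ite_mem, Finset.sum_const, nsmul_eq_mul, Finset.erase_inter]
      simp
    simp only [stratCost, List.map_cons, List.sum_cons] at ih ⊢
    rw [ih]
    simp only [inviteRate_cons, Finset.sum_add_distrib, hcard, totalRate_cons]
    ring

theorem Stable.totalRate_le {a b c : ℝ} {cfg : Config V} (hst : Stable a b c cfg) (hb : 0 < b)
    {v : V} {s : List (Finset V × ℝ)} (hs : ValidStrategy v s)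
    (h : ∀ u, u ≠ v → inviteRate s u = inviteRate (cfg v) u) :
    totalRate (cfg v) ≤ totalRate s := by
  have hv : ∀ e ∈ cfg v, v ∈ e.1 := fun e he => (hst.1 v e he).1
  have hcost := hst.2 v s hs
  rw [utility, utility, Function.update_self, nbrs_update_eq (fun e he => (hs e he).1) hv h,
    stratCost_eq, stratCost_eq,
    Finset.sum_congr rfl fun u hu => h u (Finset.ne_of_mem_erase hu)] at hcost
  exact le_of_mul_le_mul_left (by linarith) hb

theorem Stable.totalRate_le_of_inviteRate_le {a b c : ℝ} {cfg : Config V}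
    (hst : Stable a b c cfg) (hb : 0 < b) {v : V} {B : ℝ} (hB : 0 ≤ B)
    (h : ∀ u, u ≠ v → inviteRate (cfg v) u ≤ B) : totalRate (cfg v) ≤ B := by
  obtain ⟨s, hs, hinv, htot⟩ := exists_validStrategy_inviteRate_eq v (inviteRate (cfg v)) B hB
    (fun u _ => inviteRate_nonneg (hst.1 v) u) h
  exact (hst.totalRate_le hb hs hinv).trans htot

end Response

theorem argmax_in_all_events_general {V : Type*} [Fintype V] [DecidableEq V]
    (a b c : ℝ) (hb : 0 < b)
    (cfg : Config V) (hst : Stable a b c cfg)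
    (v x : V)
    (hmax : ∀ u : V, u ≠ v → rateBy cfg v v u ≤ rateBy cfg v v x) :
    ∀ e ∈ cfg v, x ∈ e.1 := by
  intro e he
  by_contra hxe
  have hvalid := hst.1 v
  have hrate (u : V) : rateBy cfg v v u = inviteRate (cfg v) u := by
    rw [rateBy_comm]
    exact rateBy_eq_inviteRate (fun e he => (hvalid e he).1) u
  have hle : totalRate (cfg v) ≤ inviteRate (cfg v) x :=
    hst.totalRate_le_of_inviteRate_le hb (inviteRate_nonneg hvalid x) fun u hu => by
      simpa only [hrate] using hmax u hu
  exact (inviteRate_lt_totalRate hvalid he hxe).not_ge hle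

/-- In any stable configuration, if `x` maximizes the invitation rate of
`v` (over all agents `≠ v`) and is invited at positive rate, then `x` belongs to every
event held by `v`. -/
theorem argmax_in_all_events {V : Type*} [Fintype V] [DecidableEq V]
    (a b c : ℝ) (ha : 0 < a) (hb : 0 < b) (hc : 0 < c)
    (cfg : Config V) (hst : Stable a b c cfg)
    (v x : V) (hx : x ≠ v)
    (hmax : ∀ u : V, u ≠ v → rateBy cfg v v u ≤ rateBy cfg v v x)
    (hpos : 0 < rateBy cfg v v x) :
    ∀ e ∈ cfg v, x ∈ e.1 :=
  argmax_in_all_events_general a b c hb cfg hst v x hmax
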